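/- arXiv:1907.13533 — 2 statements merged into one kernel-verified Lean document; each statement's English description precedes it below -/
import Mathlib

section
/- Let (b_m)_{m≥0} be a nonincreasing sequence in [0,1) with b₀ < 1, and define b*_n as the probability that the house-of-cards Markov chain started at 0 with transitions P(i,i+1)=1−b_i, P(i,0)=b_i is at 0 at time n. For any nonnegative integer k, if Σ_{m≥1} m^k b_m < ∞ then Σ_{m≥1} m^k b*_m < ∞. -/
/-- Distribution of the "house-of-cards" Markov chain on `ℕ` started at `0`, with
transitions `P(i, i+1) = 1 - b i` and `P(i, 0) = b i`:
`hoc b n j` is the probability that the chain is at state `j` at time `n`. -/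
noncomputable def hoc (b : ℕ → ℝ) : ℕ → ℕ → ℝ
  | 0 => fun j => if j = 0 then 1 else 0
  | n + 1 => fun j =>
      match j with
      | 0 => ∑' i, hoc b n i * b i
      | i + 1 => hoc b n i * (1 - b i)

/-!
The chain regenerates at every visit to `0`, so `u n = P(S_n = 0)` satisfies the renewal
equation `u = δ₀ + f ⋆ u`, where `f n = P(τ = n) ≤ b (n - 1)` is the law of the first return
time. Since `b` is summable and bounded by `b 0 < 1`, the survival probability `∏ (1 - b m)`
stays above `exp (-(∑ b) / (1 - b 0)) > 0`, so the return law is defective: `∑ f < 1`.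
Expanding `n ^ l = (i + j) ^ l` binomially in the renewal equation bounds the partial `l`-th
moment `T` of `u` by `1 + (∑ f) T` plus products of moments of `f` with lower moments of `u`;
the defect lets the term `(∑ f) T` be absorbed, and induction on `l ≤ k` finishes.
-/

open Finset

theorem sum_range_sum_antidiagonal_mul_le {g h : ℕ → ℝ} (hg : ∀ i, 0 ≤ g i) (hh : ∀ j, 0 ≤ h j)
    (N : ℕ) :
    ∑ n ∈ range N, ∑ x ∈ antidiagonal n, g x.1 * h x.2 ≤
      (∑ i ∈ range N, g i) * ∑ j ∈ range N, h j := by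
  have hinj : Set.InjOn (fun x : Σ _ : ℕ, ℕ × ℕ => x.2) ((range N).sigma antidiagonal) := by
    rintro ⟨n, x⟩ hx ⟨n', x'⟩ hx' (rfl : x = x')
    simp only [coe_sigma, Set.mem_sigma_iff, mem_coe, HasAntidiagonal.mem_antidiagonal] at hx hx'
    rw [← hx.2, ← hx'.2]
  calc ∑ n ∈ range N, ∑ x ∈ antidiagonal n, g x.1 * h x.2
      = ∑ y ∈ ((range N).sigma antidiagonal).image (·.2), g y.1 * h y.2 := by
        rw [sum_image hinj, sum_sigma]
    _ ≤ ∑ y ∈ range N ×ˢ range N, g y.1 * h y.2 := by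
        refine sum_le_sum_of_subset_of_nonneg ?_ fun y _ _ => mul_nonneg (hg _) (hh _)
        intro y hy
        simp only [mem_image, mem_sigma, mem_range, HasAntidiagonal.mem_antidiagonal] at hy
        obtain ⟨⟨n, x⟩, ⟨hn, hx⟩, rfl⟩ := hy
        simp only [mem_product, mem_range] at hn hx ⊢
        omega
    _ = (∑ i ∈ range N, g i) * ∑ j ∈ range N, h j := by rw [sum_product, sum_mul_sum]

theorem pow_le_one_add_pow {p k : ℕ} (hpk : p ≤ k) (n : ℕ) : (n : ℝ) ^ p ≤ 1 + (n : ℝ) ^ k := by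
  rcases Nat.eq_zero_or_pos n with rfl | hn
  · rw [Nat.cast_zero]
    linarith [zero_pow_le_one (M₀ := ℝ) p, pow_nonneg (le_refl (0 : ℝ)) k]
  · linarith [pow_le_pow_right₀ (Nat.one_le_cast.2 hn : (1 : ℝ) ≤ n) hpk]

theorem Summable.pow_mul_of_le {F : ℕ → ℝ} (hF : ∀ n, 0 ≤ F n) (hFs : Summable F) {k : ℕ}
    (hFk : Summable fun n : ℕ => (n : ℝ) ^ k * F n) {p : ℕ} (hpk : p ≤ k) :
    Summable fun n : ℕ => (n : ℝ) ^ p * F n :=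
  (hFs.add hFk).of_nonneg_of_le (fun n => mul_nonneg (by positivity) (hF n)) fun n => by
    rw [← one_add_mul]
    exact mul_le_mul_of_nonneg_right (pow_le_one_add_pow hpk n) (hF n)

theorem sum_range_pow_mul_le_of_renewal {u F : ℕ → ℝ} (hu : ∀ n, 0 ≤ u n) (hF : ∀ n, 0 ≤ F n)
    (hren : ∀ n, u n ≤ (if n = 0 then 1 else 0) + ∑ x ∈ antidiagonal n, F x.1 * u x.2)
    (l N : ℕ) :
    ∑ n ∈ range N, (n : ℝ) ^ l * u n ≤
      1 + ∑ p ∈ range (l + 1), (l.choose p : ℝ) *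
        ((∑ i ∈ range N, (i : ℝ) ^ p * F i) * ∑ j ∈ range N, (j : ℝ) ^ (l - p) * u j) := by
  have hexpand : ∀ n : ℕ, (n : ℝ) ^ l * ∑ x ∈ antidiagonal n, F x.1 * u x.2 =
      ∑ p ∈ range (l + 1), (l.choose p : ℝ) *
        ∑ x ∈ antidiagonal n, ((x.1 : ℝ) ^ p * F x.1) * ((x.2 : ℝ) ^ (l - p) * u x.2) := by
    intro n
    simp only [mul_sum]
    rw [sum_comm]
    refine sum_congr rfl fun x hx => ?_
    rw [← HasAntidiagonal.mem_antidiagonal.mp hx, Nat.cast_add, add_pow, sum_mul]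
    exact sum_congr rfl fun p _ => by ring
  calc ∑ n ∈ range N, (n : ℝ) ^ l * u n
      ≤ ∑ n ∈ range N, ((n : ℝ) ^ l * (if n = 0 then 1 else 0) +
          (n : ℝ) ^ l * ∑ x ∈ antidiagonal n, F x.1 * u x.2) :=
        sum_le_sum fun n _ => by
          rw [← mul_add]
          exact mul_le_mul_of_nonneg_left (hren n) (by positivity)
    _ ≤ 1 + ∑ p ∈ range (l + 1), (l.choose p : ℝ) * ∑ n ∈ range N,
          ∑ x ∈ antidiagonal n, ((x.1 : ℝ) ^ p * F x.1) * ((x.2 : ℝ) ^ (l - p) * u x.2) := by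
        rw [sum_add_distrib, Finset.sum_congr rfl fun n _ => hexpand n, sum_comm]
        simp only [mul_ite, mul_one, mul_zero, sum_ite_eq', ← mul_sum]
        gcongr
        split_ifs <;> simp [zero_pow_le_one]
    _ ≤ _ := by
        gcongr with p
        exact sum_range_sum_antidiagonal_mul_le (g := fun i : ℕ => (i : ℝ) ^ p * F i)
          (h := fun j : ℕ => (j : ℝ) ^ (l - p) * u j) (fun i => mul_nonneg (by positivity) (hF i))
          (fun j => mul_nonneg (by positivity) (hu j)) N

theorem summable_pow_mul_of_renewal {u F : ℕ → ℝ} (hu : ∀ n, 0 ≤ u n) (hF : ∀ n, 0 ≤ F n)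
    (hren : ∀ n, u n ≤ (if n = 0 then 1 else 0) + ∑ x ∈ antidiagonal n, F x.1 * u x.2)
    (hFs : Summable F) (hF1 : ∑' n, F n < 1) {k : ℕ}
    (hFk : Summable fun n : ℕ => (n : ℝ) ^ k * F n) :
    Summable fun n : ℕ => (n : ℝ) ^ k * u n := by
  suffices ∀ l ≤ k, Summable fun n : ℕ => (n : ℝ) ^ l * u n from this k le_rfl
  intro l
  induction l using Nat.strong_induction_on with
  | _ l ih =>
  intro hlk
  set ρ := ∑' n, F n
  set K := ∑ p ∈ range l, (l.choose (p + 1) : ℝ) *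
    ((∑' i : ℕ, (i : ℝ) ^ (p + 1) * F i) * ∑' j : ℕ, (j : ℝ) ^ (l - (p + 1)) * u j)
  refine summable_of_sum_range_le (c := (1 + K) / (1 - ρ))
    (fun n => mul_nonneg (by positivity) (hu n)) fun N => ?_
  set T := ∑ n ∈ range N, (n : ℝ) ^ l * u n
  have hρ : ∑ i ∈ range N, F i ≤ ρ := hFs.sum_le_tsum _ fun i _ => hF i
  have hK : ∑ p ∈ range l, (l.choose (p + 1) : ℝ) *
      ((∑ i ∈ range N, (i : ℝ) ^ (p + 1) * F i) * ∑ j ∈ range N, (j : ℝ) ^ (l - (p + 1)) * u j)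
      ≤ K := by
    refine sum_le_sum fun p hp =>
      mul_le_mul_of_nonneg_left (mul_le_mul ?_ ?_ ?_ ?_) (by positivity)
    · exact (hFs.pow_mul_of_le hF hFk (by grind)).sum_le_tsum _
        fun i _ => mul_nonneg (by positivity) (hF i)
    · exact (ih _ (by grind) (by grind)).sum_le_tsum _ fun j _ => mul_nonneg (by positivity) (hu j)
    · exact sum_nonneg fun j _ => mul_nonneg (by positivity) (hu j)
    · exact tsum_nonneg fun i => mul_nonneg (by positivity) (hF i)
  have hT0 : 0 ≤ T := sum_nonneg fun n _ => mul_nonneg (by positivity) (hu n)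
  have hT := sum_range_pow_mul_le_of_renewal hu hF hren l N
  rw [sum_range_succ', Nat.choose_zero_right, Nat.sub_zero] at hT
  simp only [pow_zero, one_mul, Nat.cast_one] at hT
  -- The `p = 0` term of `hT` is `(∑ F) * T ≤ ρ * T`; since `ρ < 1` it is absorbed into `T`.
  rw [le_div_iff₀ (sub_pos.2 hF1)]
  nlinarith [mul_le_mul_of_nonneg_right hρ hT0]

theorem sum_range_prod_one_sub_mul (b : ℕ → ℝ) (N : ℕ) :
    ∑ i ∈ range N, (∏ m ∈ range i, (1 - b m)) * b i = 1 - ∏ m ∈ range N, (1 - b m) := by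
  induction N with
  | zero => simp
  | succ N ih => rw [sum_range_succ, ih, prod_range_succ]; ring

theorem Real.exp_neg_div_le_one_sub {x a : ℝ} (hx : 0 ≤ x) (hxa : x ≤ a) (ha : a < 1) :
    Real.exp (-(x / (1 - a))) ≤ 1 - x := by
  have hx1 : 0 < 1 - x := by linarith
  calc Real.exp (-(x / (1 - a))) ≤ Real.exp (-(x / (1 - x))) := by
        gcongr
    _ = (Real.exp (x / (1 - x)))⁻¹ := Real.exp_neg _
    _ ≤ (x / (1 - x) + 1)⁻¹ := by gcongr; exact Real.add_one_le_exp _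
    _ = 1 - x := by field_simp; ring

theorem Real.exp_neg_tsum_div_le_prod_one_sub {b : ℕ → ℝ} {a : ℝ} (hb0 : ∀ m, 0 ≤ b m)
    (hba : ∀ m, b m ≤ a) (ha : a < 1) (hb : Summable b) (N : ℕ) :
    Real.exp (-((∑' m, b m) / (1 - a))) ≤ ∏ m ∈ range N, (1 - b m) := by
  calc Real.exp (-((∑' m, b m) / (1 - a)))
      ≤ Real.exp (-((∑ m ∈ range N, b m) / (1 - a))) := by
        gcongr
        exact hb.sum_le_tsum _ fun m _ => hb0 m
    _ = ∏ m ∈ range N, Real.exp (-(b m / (1 - a))) := by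
        rw [← Real.exp_sum, sum_div, sum_neg_distrib]
    _ ≤ ∏ m ∈ range N, (1 - b m) :=
        prod_le_prod (fun m _ => (Real.exp_pos _).le)
          fun m _ => Real.exp_neg_div_le_one_sub (hb0 m) (hba m) ha

theorem hoc_succ_zero (b : ℕ → ℝ) (n : ℕ) : hoc b (n + 1) 0 = ∑' i, hoc b n i * b i := rfl

theorem hoc_succ_succ (b : ℕ → ℝ) (n i : ℕ) : hoc b (n + 1) (i + 1) = hoc b n i * (1 - b i) := rfl

theorem hoc_eq_zero_of_lt (b : ℕ → ℝ) {n i : ℕ} (h : n < i) : hoc b n i = 0 := by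
  induction n generalizing i with
  | zero => obtain ⟨i, rfl⟩ := Nat.exists_eq_add_of_lt h; rfl
  | succ n ih =>
    obtain ⟨i, rfl⟩ := Nat.exists_eq_add_of_lt (Nat.zero_lt_of_lt h)
    simp only [zero_add] at h ⊢
    rw [hoc_succ_succ, ih (by omega), zero_mul]

theorem hoc_add_self (b : ℕ → ℝ) (j i : ℕ) :
    hoc b (j + i) i = hoc b j 0 * ∏ m ∈ range i, (1 - b m) := by
  induction i with
  | zero => simp
  | succ i ih => rw [← add_assoc, hoc_succ_succ, ih, prod_range_succ, mul_assoc]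

theorem hoc_nonneg {b : ℕ → ℝ} (hb0 : ∀ m, 0 ≤ b m) (hb1 : ∀ m, b m ≤ 1) (n i : ℕ) :
    0 ≤ hoc b n i := by
  induction n generalizing i with
  | zero => unfold hoc; positivity
  | succ n ih =>
    cases i with
    | zero => exact tsum_nonneg fun i => mul_nonneg (ih i) (hb0 i)
    | succ i => exact mul_nonneg (ih i) (sub_nonneg.2 (hb1 i))

/-- `P(τ = n)`, where `τ` is the first return time of the chain to `0`. -/
noncomputable def hocFirstReturn (b : ℕ → ℝ) : ℕ → ℝ
  | 0 => 0
  | n + 1 => (∏ m ∈ range n, (1 - b m)) * b n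

theorem hocFirstReturn_nonneg {b : ℕ → ℝ} (hb0 : ∀ m, 0 ≤ b m) (hb1 : ∀ m, b m ≤ 1) (n : ℕ) :
    0 ≤ hocFirstReturn b n := by
  cases n with
  | zero => exact le_rfl
  | succ n => exact mul_nonneg (prod_nonneg fun m _ => sub_nonneg.2 (hb1 m)) (hb0 n)

theorem sum_range_succ_hocFirstReturn (b : ℕ → ℝ) (N : ℕ) :
    ∑ n ∈ range (N + 1), hocFirstReturn b n = 1 - ∏ m ∈ range N, (1 - b m) := by
  rw [sum_range_succ', hocFirstReturn, add_zero]
  exact sum_range_prod_one_sub_mul b N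

theorem hoc_renewal (b : ℕ → ℝ) (n : ℕ) :
    hoc b n 0 = (if n = 0 then 1 else 0) +
      ∑ x ∈ antidiagonal n, hocFirstReturn b x.1 * hoc b x.2 0 := by
  cases n with
  | zero => simp [hoc, hocFirstReturn]
  | succ n =>
    rw [if_neg n.succ_ne_zero, zero_add, Nat.sum_antidiagonal_succ, hocFirstReturn, zero_mul,
      zero_add, hoc_succ_zero, tsum_eq_sum (s := range (n + 1)) fun i hi =>
        by rw [hoc_eq_zero_of_lt b (by simpa using hi), zero_mul],
      Nat.sum_antidiagonal_eq_sum_range_succ fun i j => hocFirstReturn b (i + 1) * hoc b j 0]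
    refine sum_congr rfl fun i hi => ?_
    obtain ⟨j, rfl⟩ := Nat.exists_eq_add_of_le (mem_range_succ_iff.mp hi)
    rw [hocFirstReturn, Nat.add_sub_cancel_left, add_comm i j, hoc_add_self]
    ring

theorem sum_range_hocFirstReturn_le {b : ℕ → ℝ} {a : ℝ} (hb0 : ∀ m, 0 ≤ b m) (hba : ∀ m, b m ≤ a)
    (ha : a < 1) (hb : Summable b) (N : ℕ) :
    ∑ n ∈ range N, hocFirstReturn b n ≤ 1 - Real.exp (-((∑' m, b m) / (1 - a))) :=
  calc ∑ n ∈ range N, hocFirstReturn b n ≤ ∑ n ∈ range (N + 1), hocFirstReturn b n :=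
        sum_le_sum_of_subset_of_nonneg (range_subset_range.2 N.le_succ) fun n _ _ =>
          hocFirstReturn_nonneg hb0 (fun m => (hba m).trans ha.le) n
    _ = 1 - ∏ m ∈ range N, (1 - b m) := sum_range_succ_hocFirstReturn b N
    _ ≤ 1 - Real.exp (-((∑' m, b m) / (1 - a))) :=
        sub_le_sub_left (Real.exp_neg_tsum_div_le_prod_one_sub hb0 hba ha hb N) 1

theorem summable_hocFirstReturn {b : ℕ → ℝ} {a : ℝ} (hb0 : ∀ m, 0 ≤ b m) (hba : ∀ m, b m ≤ a)
    (ha : a < 1) (hb : Summable b) : Summable (hocFirstReturn b) :=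
  summable_of_sum_range_le (hocFirstReturn_nonneg hb0 fun m => (hba m).trans ha.le)
    (sum_range_hocFirstReturn_le hb0 hba ha hb)

theorem tsum_hocFirstReturn_lt_one {b : ℕ → ℝ} {a : ℝ} (hb0 : ∀ m, 0 ≤ b m)
    (hba : ∀ m, b m ≤ a) (ha : a < 1) (hb : Summable b) : ∑' n, hocFirstReturn b n < 1 :=
  (Real.tsum_le_of_sum_range_le (hocFirstReturn_nonneg hb0 fun m => (hba m).trans ha.le)
    (sum_range_hocFirstReturn_le hb0 hba ha hb)).trans_lt (sub_lt_self 1 (Real.exp_pos _))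

theorem summable_pow_mul_hocFirstReturn {b : ℕ → ℝ} (hb0 : ∀ m, 0 ≤ b m) (hb1 : ∀ m, b m ≤ 1)
    {k : ℕ} (hb : Summable fun m : ℕ => ((m + 1 : ℕ) : ℝ) ^ k * b m) :
    Summable fun n : ℕ => (n : ℝ) ^ k * hocFirstReturn b n := by
  refine (summable_nat_add_iff 1).mp (hb.of_nonneg_of_le
    (fun m => mul_nonneg (by positivity) (hocFirstReturn_nonneg hb0 hb1 _)) fun m => ?_)
  have hprod : ∏ i ∈ range m, (1 - b i) ≤ 1 :=
    prod_le_one (fun i _ => sub_nonneg.2 (hb1 i)) fun i _ => sub_le_self 1 (hb0 i)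
  exact mul_le_mul_of_nonneg_left (mul_le_of_le_one_left (hb0 m) hprod) (by positivity)

theorem summable_succ_pow_mul_of_summable_succ_pow_mul_succ {b : ℕ → ℝ} (hb0 : ∀ m, 0 ≤ b m)
    {k : ℕ} (hb : Summable fun m : ℕ => ((m + 1 : ℕ) : ℝ) ^ k * b (m + 1)) :
    Summable fun m : ℕ => ((m + 1 : ℕ) : ℝ) ^ k * b m := by
  refine (summable_nat_add_iff 1).mp ((hb.mul_left (2 ^ k)).of_nonneg_of_le
    (fun m => mul_nonneg (by positivity) (hb0 _)) fun m => ?_)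
  rw [← mul_assoc, ← mul_pow]
  gcongr
  · exact hb0 _
  · push_cast; linarith

theorem stmt6_general (b : ℕ → ℝ) (hb0 : ∀ m, 0 ≤ b m) (hb01 : b 0 < 1)
    (hmono : Antitone b) (k : ℕ)
    (hsum : Summable fun m : ℕ => ((m + 1 : ℕ) : ℝ) ^ k * b (m + 1)) :
    Summable (fun m : ℕ => ((m + 1 : ℕ) : ℝ) ^ k * hoc b (m + 1) 0) := by
  have hb_le : ∀ m, b m ≤ b 0 := fun m => hmono m.zero_le
  have hb1 : ∀ m, b m ≤ 1 := fun m => (hb_le m).trans hb01.le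
  have hbk := summable_succ_pow_mul_of_summable_succ_pow_mul_succ hb0 hsum
  have hbs : Summable b := hbk.of_nonneg_of_le hb0 fun m =>
    le_mul_of_one_le_left (hb0 m) (one_le_pow₀ (by simp))
  exact (summable_nat_add_iff 1).mpr <|
    summable_pow_mul_of_renewal (hoc_nonneg hb0 hb1 · 0) (hocFirstReturn_nonneg hb0 hb1)
      (fun n => (hoc_renewal b n).le) (summable_hocFirstReturn hb0 hb_le hb01 hbs)
      (tsum_hocFirstReturn_lt_one hb0 hb_le hb01 hbs) (summable_pow_mul_hocFirstReturn hb0 hb1 hbk)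

/-- Polynomial moments: if `(b m)` is nonincreasing in `[0,1)` with `b 0 < 1` and
`Σ_{m≥1} m^k b m < ∞`, then `Σ_{m≥1} m^k b*_m < ∞` where `b*_n = P(S_n = 0)` for the
house-of-cards chain. -/
theorem stmt6 (b : ℕ → ℝ) (hb0 : ∀ m, 0 ≤ b m) (hb1 : ∀ m, b m < 1) (hb01 : b 0 < 1)
    (hmono : Antitone b) (k : ℕ)
    (hsum : Summable fun m : ℕ => ((m + 1 : ℕ) : ℝ) ^ k * b (m + 1)) :
    Summable (fun m : ℕ => ((m + 1 : ℕ) : ℝ) ^ k * hoc b (m + 1) 0) :=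
  stmt6_general b hb0 hb01 hmono k hsum
end

section
/- Under the same hypotheses on the family (G_{y,x}) (L-Lipschitz joint bound, and r-fold compositions κ-contractions with κ ∈ (0,1)), suppose a sequence (λ̄_t)_{t∈ℤ} in ℝ^k satisfies λ̄_t = G_{y_{t−1},x_t}(λ̄_{t−1}) for all t and lim inf_{t→−∞} |λ̄_t| < ∞. Then λ̄_t equals the limit λ_t^{(y,x)} = lim_n G_{y_{t−1},x_t}∘⋯∘G_{y_{t−n−1},x_{t−n}}(0) for every t ∈ ℤ. In particular, such a bounded-in-the-past solution is unique. -/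
open Classical

/-- Backward iterates of the observation-driven recursion:
`backIter G y x t n z = G (y (t-1)) (x t) (G (y (t-2)) (x (t-1)) (… (G (y (t-n)) (x (t-n+1)) z)))`,
the composition of the `n` maps `G_{y_{t-1},x_t} ∘ ⋯ ∘ G_{y_{t-n},x_{t-n+1}}` applied to `z`. -/
def backIter {E V W : Type*} (G : E → V → W → W) (y : ℤ → E) (x : ℤ → V) :
    ℤ → ℕ → W → W
  | _, 0, z => z
  | t, n + 1, z => G (y (t - 1)) (x t) (backIter G y x (t - 1) n z)

/-!
Unrolling the recursion gives `λ̄ t = G_{t,m}(λ̄ (t - m))` for the `m`-fold backward composition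
`G_{t,m}`. Blocks of `r` maps contract by `κ` and a leftover block of fewer than `r` maps is
`L^r`-Lipschitz, so `‖λ̄ t - G_{t,m}(0)‖ ≤ κ^(m/r) L^r ‖λ̄ (t - m)‖`. Along the times `t - m` where
`‖λ̄‖ ≤ C`, the right side tends to `0` while `G_{t,m}(0) → λ t`, hence `λ̄ t = λ t`.
-/

open Filter Topology

section BackIter

variable {E V W : Type*} (G : E → V → W → W) (y : ℤ → E) (x : ℤ → V)

theorem backIter_add (m n : ℕ) (t : ℤ) (z : W) :
    backIter G y x t (m + n) z = backIter G y x t m (backIter G y x (t - m) n z) := by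
  induction m generalizing t with
  | zero => simp [backIter]
  | succ m ih =>
    rw [Nat.add_right_comm, backIter, ih, backIter]
    congr 3
    push_cast
    ring

theorem eq_backIter_of_recursion (lamBar : ℤ → W)
    (hrec : ∀ t, lamBar t = G (y (t - 1)) (x t) (lamBar (t - 1))) (n : ℕ) (t : ℤ) :
    lamBar t = backIter G y x t n (lamBar (t - n)) := by
  induction n generalizing t with
  | zero => simp [backIter]
  | succ n ih =>
    rw [hrec t, ih (t - 1), backIter]
    congr 3
    push_cast
    ring

variable [NormedAddCommGroup W]

theorem norm_backIter_sub_le_pow {L : ℝ} (hL : 0 ≤ L)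
    (hG : ∀ e v (z z' : W), ‖G e v z - G e v z'‖ ≤ L * ‖z - z'‖) (n : ℕ) (t : ℤ) (z z' : W) :
    ‖backIter G y x t n z - backIter G y x t n z'‖ ≤ L ^ n * ‖z - z'‖ := by
  induction n generalizing t with
  | zero => simp [backIter]
  | succ n ih =>
    calc ‖backIter G y x t (n + 1) z - backIter G y x t (n + 1) z'‖
        ≤ L * ‖backIter G y x (t - 1) n z - backIter G y x (t - 1) n z'‖ := hG _ _ _ _
      _ ≤ L * (L ^ n * ‖z - z'‖) := mul_le_mul_of_nonneg_left (ih _) hL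
      _ = L ^ (n + 1) * ‖z - z'‖ := by ring

variable {r : ℕ} {κ : ℝ} (hκ : 0 ≤ κ)
  (hcontract : ∀ t (z z' : W),
    ‖backIter G y x t r z - backIter G y x t r z'‖ ≤ κ * ‖z - z'‖)
include hκ hcontract

theorem norm_backIter_mul_sub_le (m : ℕ) (t : ℤ) (z z' : W) :
    ‖backIter G y x t (m * r) z - backIter G y x t (m * r) z'‖ ≤ κ ^ m * ‖z - z'‖ := by
  induction m generalizing t with
  | zero => simp [backIter]
  | succ m ih =>
    rw [Nat.succ_mul, Nat.add_comm, backIter_add, backIter_add]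
    calc _ ≤ κ * ‖backIter G y x (t - r) (m * r) z - backIter G y x (t - r) (m * r) z'‖ :=
          hcontract _ _ _
      _ ≤ κ * (κ ^ m * ‖z - z'‖) := mul_le_mul_of_nonneg_left (ih _) hκ
      _ = κ ^ (m + 1) * ‖z - z'‖ := by ring

theorem norm_backIter_sub_le (hr : 0 < r) {L : ℝ} (hL : 1 ≤ L)
    (hG : ∀ e v (z z' : W), ‖G e v z - G e v z'‖ ≤ L * ‖z - z'‖) (n : ℕ) (t : ℤ) (z z' : W) :
    ‖backIter G y x t n z - backIter G y x t n z'‖ ≤ κ ^ (n / r) * L ^ r * ‖z - z'‖ := by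
  set s : ℤ := t - ((n / r * r : ℕ) : ℤ)
  have hn : n = n / r * r + n % r := (Nat.div_add_mod' n r).symm
  calc ‖backIter G y x t n z - backIter G y x t n z'‖
      = ‖backIter G y x t (n / r * r) (backIter G y x s (n % r) z)
          - backIter G y x t (n / r * r) (backIter G y x s (n % r) z')‖ := by
        rw [← backIter_add, ← backIter_add, ← hn]
    _ ≤ κ ^ (n / r) * ‖backIter G y x s (n % r) z - backIter G y x s (n % r) z'‖ :=
        norm_backIter_mul_sub_le G y x hκ hcontract _ _ _ _
    _ ≤ κ ^ (n / r) * (L ^ (n % r) * ‖z - z'‖) := by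
        gcongr
        exact norm_backIter_sub_le_pow G y x (by linarith) hG _ _ _ _
    _ ≤ κ ^ (n / r) * (L ^ r * ‖z - z'‖) := by
        gcongr
        exact (Nat.mod_lt n hr).le
    _ = κ ^ (n / r) * L ^ r * ‖z - z'‖ := by ring

theorem tendsto_backIter_zero_of_bdd (hκ1 : κ < 1) (hr : 0 < r) {L : ℝ} (hL : 1 ≤ L)
    (hG : ∀ e v (z z' : W), ‖G e v z - G e v z'‖ ≤ L * ‖z - z'‖) {lamBar : ℤ → W}
    (hrec : ∀ t, lamBar t = G (y (t - 1)) (x t) (lamBar (t - 1))) {m : ℕ → ℕ}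
    (hm : Tendsto m atTop atTop) {C : ℝ} {t : ℤ} (hC : ∀ j, ‖lamBar (t - m j)‖ ≤ C) :
    Tendsto (fun j => backIter G y x t (m j) 0) atTop (𝓝 (lamBar t)) := by
  have h_bound : Tendsto (fun j => κ ^ (m j / r) * L ^ r * C) atTop (𝓝 0) := by
    simpa [mul_assoc] using ((tendsto_pow_atTop_nhds_zero_of_lt_one hκ hκ1).comp
      ((Nat.tendsto_div_const_atTop hr.ne').comp hm)).mul_const (L ^ r * C)
  refine tendsto_iff_norm_sub_tendsto_zero.mpr (squeeze_zero (fun _ => norm_nonneg _) ?_ h_bound)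
  intro j
  rw [norm_sub_rev, eq_backIter_of_recursion G y x lamBar hrec (m j) t]
  calc _ ≤ κ ^ (m j / r) * L ^ r * ‖lamBar (t - m j) - 0‖ :=
        norm_backIter_sub_le G y x hκ hcontract hr hL hG _ _ _ _
    _ ≤ κ ^ (m j / r) * L ^ r * C := by
        rw [sub_zero]
        gcongr
        exact hC j

end BackIter

theorem stmt12_general {E V W : Type*} [NormedAddCommGroup V] [NormedAddCommGroup W]
    (G : E → V → W → W) (L : ℝ) (hL : 1 ≤ L)
    (hLip : ∀ (y y' : E) (x x' : V) (z z' : W),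
      ‖G y x z - G y' x' z'‖ ≤
        L * ((if y = y' then (0 : ℝ) else 1) + ‖x - x'‖ + ‖z - z'‖))
    (r : ℕ) (hr : 0 < r) (κ : ℝ) (hκ : κ ∈ Set.Ioo (0 : ℝ) 1)
    (hcontract : ∀ (y : ℤ → E) (x : ℤ → V) (t : ℤ) (z z' : W),
      ‖backIter G y x t r z - backIter G y x t r z'‖ ≤ κ * ‖z - z'‖)
    (y : ℤ → E) (x : ℤ → V)
    (lam : ℤ → W)
    (hlam : ∀ t : ℤ,
      Filter.Tendsto (fun n : ℕ => backIter G y x t (n + 1) 0) Filter.atTop (nhds (lam t)))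
    (lamBar : ℤ → W)
    (hrec : ∀ t : ℤ, lamBar t = G (y (t - 1)) (x t) (lamBar (t - 1)))
    (hbdd : ∃ C : ℝ, ∀ t : ℤ, ∃ s ≤ t, ‖lamBar s‖ ≤ C) :
    ∀ t : ℤ, lamBar t = lam t := by
  intro t
  obtain ⟨C, hC⟩ := hbdd
  have hG : ∀ e v (z z' : W), ‖G e v z - G e v z'‖ ≤ L * ‖z - z'‖ := fun e v z z' => by
    simpa using hLip e e v v z z'
  have h_lags : ∀ j : ℕ, ∃ m : ℕ, j ≤ m ∧ ‖lamBar (t - m)‖ ≤ C := fun j => by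
    obtain ⟨s, hs, hsC⟩ := hC (t - j)
    refine ⟨(t - s).toNat, by omega, ?_⟩
    rwa [Int.toNat_of_nonneg (by omega), sub_sub_cancel]
  choose m hjm hmC using h_lags
  have hm : Tendsto m atTop atTop := tendsto_atTop_mono hjm tendsto_id
  have h_lam : Tendsto (fun j => backIter G y x t (m j) 0) atTop (𝓝 (lam t)) :=
    ((tendsto_add_atTop_iff_nat (f := fun n => backIter G y x t n 0) 1).mp (hlam t)).comp hm
  exact tendsto_nhds_unique
    (tendsto_backIter_zero_of_bdd G y x hκ.1.le (hcontract y x) hκ.2 hr hL hG hrec hm hmC) h_lam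

/-- Uniqueness of the bounded-in-the-past solution: any sequence `λ̄` satisfying the
recursion `λ̄ t = G (y (t-1)) (x t) (λ̄ (t-1))` with `lim inf_{t→-∞} ‖λ̄ t‖ < ∞`
coincides with the limit of the backward iterates started from `0`. -/
theorem stmt12 {E V W : Type*} [NormedAddCommGroup V] [NormedAddCommGroup W]
    [CompleteSpace W]
    (G : E → V → W → W) (L : ℝ) (hL : 1 ≤ L)
    (hLip : ∀ (y y' : E) (x x' : V) (z z' : W),
      ‖G y x z - G y' x' z'‖ ≤
        L * ((if y = y' then (0 : ℝ) else 1) + ‖x - x'‖ + ‖z - z'‖))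
    (r : ℕ) (hr : 0 < r) (κ : ℝ) (hκ : κ ∈ Set.Ioo (0 : ℝ) 1)
    (hcontract : ∀ (y : ℤ → E) (x : ℤ → V) (t : ℤ) (z z' : W),
      ‖backIter G y x t r z - backIter G y x t r z'‖ ≤ κ * ‖z - z'‖)
    (y : ℤ → E) (x : ℤ → V)
    (hx : ∀ t : ℤ, Summable fun i : ℕ => κ ^ ((i : ℝ) / (r : ℝ)) * ‖x (t - i)‖)
    (lam : ℤ → W)
    (hlam : ∀ t : ℤ,
      Filter.Tendsto (fun n : ℕ => backIter G y x t (n + 1) 0) Filter.atTop (nhds (lam t)))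
    (lamBar : ℤ → W)
    (hrec : ∀ t : ℤ, lamBar t = G (y (t - 1)) (x t) (lamBar (t - 1)))
    (hbdd : ∃ C : ℝ, ∀ t : ℤ, ∃ s ≤ t, ‖lamBar s‖ ≤ C) :
    ∀ t : ℤ, lamBar t = lam t :=
  stmt12_general G L hL hLip r hr κ hκ hcontract y x lam hlam lamBar hrec hbdd
end
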